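/- arXiv:1301.2888 — 7 statements merged into one kernel-verified Lean document; each statement's English description precedes it below -/
import Mathlib

section
/- If f : E → F satisfies the cubic functional equation, then f(rx) = r³ f(x) for every rational number r and every x ∈ E. -/
theorem cubic_map_rat_smul {E F : Type*} [AddCommGroup E] [Module ℝ E]
    [AddCommGroup F] [Module ℝ F] (f : E → F)
    (hf : ∀ x y : E, f ((2 : ℝ) • x + y) + f ((2 : ℝ) • x - y)
      = (2 : ℝ) • f (x + y) + (2 : ℝ) • f (x - y) + (12 : ℝ) • f x) :
    ∀ (r : ℚ) (x : E), f ((r : ℝ) • x) = ((r : ℝ) ^ 3) • f x := by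
  -- f 0 = 0
  have h0 : f 0 = 0 := by
    have h := hf 0 0
    simp only [smul_zero, add_zero, sub_zero] at h
    have h14 : (14 : ℝ) • f 0 = 0 := by linear_combination (norm := module) -h
    have := smul_eq_zero.mp h14
    simpa using this
  -- oddness
  have hodd : ∀ x : E, f (-x) = - f x := by
    intro x
    have h := hf 0 x
    simp only [smul_zero, zero_add, zero_sub, h0, add_zero] at h
    linear_combination (norm := module) -h
  -- natural multiples
  have hnat : ∀ n : ℕ, ∀ x : E, f ((n : ℝ) • x) = ((n : ℝ) ^ 3) • f x := by
    intro n
    induction n using Nat.strong_induction_on with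
    | _ n ih =>
      match n with
      | 0 => intro x; simp [h0]
      | 1 => intro x; simp
      | 2 =>
        intro x
        have h := hf x 0
        simp only [add_zero, sub_zero, h0, smul_zero] at h
        have h2' : (2:ℝ) • f ((2:ℝ) • x) = (2:ℝ) • (((2:ℝ)^3) • f x) := by
          linear_combination (norm := module) h
        have h2 := smul_right_injective F (two_ne_zero (α := ℝ)) h2'
        push_cast
        exact h2
      | 3 =>
        intro x
        have h2 := ih 2 (by norm_num) x
        have h := hf x x
        have e1 : (2:ℝ) • x + x = ((3:ℕ):ℝ) • x := by push_cast; module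
        have e2 : (2:ℝ) • x - x = x := by module
        have e3 : x + x = ((2:ℕ):ℝ) • x := by push_cast; module
        rw [e1, e2, e3, sub_self, h0, h2] at h
        push_cast at h ⊢
        linear_combination (norm := module) h
      | (m+4) =>
        intro x
        have h := hf x (((m:ℝ)+2) • x)
        have e1 : (2:ℝ) • x + ((m:ℝ)+2) • x = (((m+4:ℕ)):ℝ) • x := by push_cast; module
        have e2 : (2:ℝ) • x - ((m:ℝ)+2) • x = -(((m:ℕ):ℝ) • x) := by push_cast; module
        have e3 : x + ((m:ℝ)+2) • x = (((m+3:ℕ)):ℝ) • x := by push_cast; module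
        have e4 : x - ((m:ℝ)+2) • x = -((((m+1:ℕ)):ℝ) • x) := by push_cast; module
        rw [e1, e2, e3, e4, hodd, hodd] at h
        have i0 := ih m (by omega) x
        have i1 := ih (m+1) (by omega) x
        have i3 := ih (m+3) (by omega) x
        rw [i0, i1, i3] at h
        push_cast at h ⊢
        linear_combination (norm := module) h
  -- integer multiples
  have hint : ∀ n : ℤ, ∀ x : E, f ((n : ℝ) • x) = ((n : ℝ) ^ 3) • f x := by
    intro n x
    obtain ⟨m, rfl | rfl⟩ := n.eq_nat_or_neg
    · exact_mod_cast hnat m x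
    · have e : ((-(m:ℤ) : ℤ) : ℝ) • x = -(((m:ℕ):ℝ) • x) := by push_cast; module
      rw [e, hodd, hnat m x]
      push_cast
      module
  -- rationals
  intro r x
  have hq : ((r.den : ℕ) : ℝ) ≠ 0 := by
    exact_mod_cast Nat.cast_ne_zero.mpr r.den_nz
  have hmul : (r : ℝ) * ((r.den : ℕ) : ℝ) = ((r.num : ℤ) : ℝ) := by
    exact_mod_cast Rat.mul_den_eq_num r
  have hxe : ((r.den : ℕ) : ℝ) • ((r : ℝ) • x) = ((r.num : ℤ) : ℝ) • x := by
    rw [smul_smul]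
    congr 1
    rw [mul_comm]
    exact hmul
  have h1 := hnat r.den ((r : ℝ) • x)
  rw [hxe, hint r.num x] at h1
  have h2 : (((r.den : ℕ) : ℝ) ^ 3) • ((r : ℝ) ^ 3 • f x) = ((r.num : ℤ) : ℝ) ^ 3 • f x := by
    rw [smul_smul]
    congr 1
    rw [← mul_pow]
    congr 1
    rw [mul_comm]
    exact hmul
  have h3 := h1.symm.trans h2.symm
  exact smul_right_injective F (pow_ne_zero 3 hq) h3
end

section
/- Let E be a normed space and F a Banach space, let δ ≥ 0 and 0 ≤ r < 3, and let f : E → F with f(0) = 0 satisfy ‖f(2x+y) + f(2x−y) − 2f(x+y) − 2f(x−y) − 12f(x)‖ ≤ δ(‖x‖^r + ‖y‖^r) for all x, y. Then the sequence n ↦ f(2ⁿx)/8ⁿ is Cauchy for every x ∈ E. -/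
open Filter Topology

theorem cubic_stability_cauchy {E F : Type*}
    [NormedAddCommGroup E] [NormedSpace ℝ E]
    [NormedAddCommGroup F] [NormedSpace ℝ F] [CompleteSpace F]
    (δ r : ℝ) (hδ : 0 ≤ δ) (hr0 : 0 ≤ r) (hr3 : r < 3)
    (f : E → F) (hf0 : f 0 = 0)
    (hf : ∀ x y : E,
      ‖f ((2 : ℝ) • x + y) + f ((2 : ℝ) • x - y) - (2 : ℝ) • f (x + y)
        - (2 : ℝ) • f (x - y) - (12 : ℝ) • f x‖ ≤ δ * (‖x‖ ^ r + ‖y‖ ^ r)) :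
    ∀ x : E, CauchySeq (fun n : ℕ => ((8 : ℝ) ^ n)⁻¹ • f (((2 : ℝ) ^ n) • x)) := by
  intro x
  set a : ℝ := (2 : ℝ) ^ r with ha
  have ha0 : (0:ℝ) < a := Real.rpow_pos_of_pos (by norm_num) r
  have ha1 : (1:ℝ) ≤ a := by
    have := Real.rpow_le_rpow_of_exponent_le (by norm_num : (1:ℝ) ≤ 2) hr0
    simpa using this
  have ha8 : a < 8 := by
    have := Real.rpow_lt_rpow_of_exponent_lt (by norm_num : (1:ℝ) < 2) hr3
    have h23 : (2:ℝ) ^ (3:ℝ) = 8 := by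
      rw [show (3:ℝ) = ((3:ℕ):ℝ) by norm_num, Real.rpow_natCast]; norm_num
    rw [h23] at this; exact this
  set C : ℝ := δ * (‖x‖ ^ r + ‖(0:E)‖ ^ r) / 16 with hC
  apply cauchySeq_of_le_geometric (r := a / 8) (C := C)
  · rw [div_lt_one (by norm_num)]; exact ha8
  · intro n
    have key := hf (((2:ℝ) ^ n) • x) 0
    have hx2 : (2:ℝ) • (((2:ℝ) ^ n) • x) + 0 = ((2:ℝ) ^ (n+1)) • x := by
      rw [add_zero, smul_smul, pow_succ]; ring_nf
    have hx2' : (2:ℝ) • (((2:ℝ) ^ n) • x) - 0 = ((2:ℝ) ^ (n+1)) • x := by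
      rw [sub_zero]; rw [add_zero] at hx2; exact hx2
    rw [hx2, hx2', add_zero, sub_zero] at key
    have hlhs : f (((2:ℝ) ^ (n+1)) • x) + f (((2:ℝ) ^ (n+1)) • x)
        - (2:ℝ) • f (((2:ℝ) ^ n) • x) - (2:ℝ) • f (((2:ℝ) ^ n) • x)
        - (12:ℝ) • f (((2:ℝ) ^ n) • x)
        = (2:ℝ) • (f (((2:ℝ) ^ (n+1)) • x) - (8:ℝ) • f (((2:ℝ) ^ n) • x)) := by
      module
    rw [hlhs, norm_smul] at key
    simp only [Real.norm_ofNat] at key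
    have key2 : ‖f (((2:ℝ) ^ (n+1)) • x) - (8:ℝ) • f (((2:ℝ) ^ n) • x)‖
        ≤ δ * (‖(((2:ℝ) ^ n) • x : E)‖ ^ r + ‖(0:E)‖ ^ r) / 2 := by linarith
    have hnx : ‖(((2:ℝ) ^ n) • x : E)‖ ^ r = a ^ n * ‖x‖ ^ r := by
      rw [norm_smul, Real.norm_eq_abs, abs_of_pos (by positivity : (0:ℝ) < (2:ℝ)^n),
        Real.mul_rpow (by positivity) (norm_nonneg x), ha,
        ← Real.rpow_natCast (2:ℝ) n, ← Real.rpow_mul (by norm_num),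
        ← Real.rpow_natCast ((2:ℝ) ^ r) n, ← Real.rpow_mul (by norm_num)]
      ring_nf
    have han : (1:ℝ) ≤ a ^ n := one_le_pow₀ ha1
    have key3 : ‖f (((2:ℝ) ^ (n+1)) • x) - (8:ℝ) • f (((2:ℝ) ^ n) • x)‖
        ≤ δ * (a ^ n * (‖x‖ ^ r + ‖(0:E)‖ ^ r)) / 2 := by
      refine key2.trans ?_
      rw [hnx]
      have h0 : (0:ℝ) ≤ ‖(0:E)‖ ^ r := Real.rpow_nonneg (norm_nonneg _) r
      have : ‖(0:E)‖ ^ r ≤ a ^ n * ‖(0:E)‖ ^ r := le_mul_of_one_le_left h0 han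
      nlinarith
    rw [dist_eq_norm]
    have hg : ((8:ℝ) ^ n)⁻¹ • f (((2:ℝ) ^ n) • x)
        - ((8:ℝ) ^ (n+1))⁻¹ • f (((2:ℝ) ^ (n+1)) • x)
        = ((8:ℝ) ^ (n+1))⁻¹ • ((8:ℝ) • f (((2:ℝ) ^ n) • x) - f (((2:ℝ) ^ (n+1)) • x)) := by
      match_scalars <;> field_simp <;> ring
    rw [hg, norm_smul, norm_sub_rev, norm_inv, norm_pow, Real.norm_ofNat]
    calc ((8:ℝ) ^ (n+1))⁻¹ * ‖f (((2:ℝ) ^ (n+1)) • x) - (8:ℝ) • f (((2:ℝ) ^ n) • x)‖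
        ≤ ((8:ℝ) ^ (n+1))⁻¹ * (δ * (a ^ n * (‖x‖ ^ r + ‖(0:E)‖ ^ r)) / 2) := by
          gcongr
      _ = C * (a / 8) ^ n := by
          rw [hC, div_pow, pow_succ]
          field_simp
          ring
end

section
/- Let E be a normed space, F a Banach space, and φ : E × E → [0,∞) a function such that φ̃(x,y) := Σ_{k=0}^∞ φ(2^k x, 2^k y)/8^k < ∞ for all x, y. If f : E → F satisfies f(0) = 0 and ‖f(2x+y) + f(2x−y) − 2f(x+y) − 2f(x−y) − 12f(x)‖ ≤ φ(x,y) for all x, y ∈ E, then there exists a unique map D : E → F satisfying the cubic functional equation with ‖f(x) − D(x)‖ ≤ (1/16) φ̃(x, 0) for all x ∈ E. -/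
open Filter Topology

theorem cubic_stability_general {E F : Type*}
    [NormedAddCommGroup E] [NormedSpace ℝ E]
    [NormedAddCommGroup F] [NormedSpace ℝ F] [CompleteSpace F]
    (φ : E → E → ℝ) (hφ0 : ∀ x y, 0 ≤ φ x y)
    (hsum : ∀ x y : E, Summable (fun k : ℕ => φ (((2 : ℝ) ^ k) • x) (((2 : ℝ) ^ k) • y) / 8 ^ k))
    (f : E → F) (hf0 : f 0 = 0)
    (hf : ∀ x y : E,
      ‖f ((2 : ℝ) • x + y) + f ((2 : ℝ) • x - y) - (2 : ℝ) • f (x + y)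
        - (2 : ℝ) • f (x - y) - (12 : ℝ) • f x‖ ≤ φ x y) :
    ∃! D : E → F,
      (∀ x y : E, D ((2 : ℝ) • x + y) + D ((2 : ℝ) • x - y)
        = (2 : ℝ) • D (x + y) + (2 : ℝ) • D (x - y) + (12 : ℝ) • D x) ∧
      (∀ x : E, ‖f x - D x‖ ≤ (1 / 16) * ∑' k : ℕ, φ (((2 : ℝ) ^ k) • x) 0 / 8 ^ k) := by
  classical
  set a : E → ℕ → ℝ := fun x n => φ (((2 : ℝ) ^ n) • x) 0 / 8 ^ n with ha
  have hsum0 : ∀ x : E, Summable (a x) := by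
    intro x
    simpa [ha] using hsum x 0
  set g : E → ℕ → F := fun x n => ((8 : ℝ)⁻¹ ^ n) • f (((2 : ℝ) ^ n) • x) with hg
  -- key one-step estimate
  have key : ∀ x' : E, ‖f ((2 : ℝ) • x') - (8 : ℝ) • f x'‖ ≤ φ x' 0 / 2 := by
    intro x'
    have h := hf x' 0
    simp only [add_zero, sub_zero] at h
    have e : f ((2 : ℝ) • x') + f ((2 : ℝ) • x') - (2 : ℝ) • f x' - (2 : ℝ) • f x'
        - (12 : ℝ) • f x' = (2 : ℝ) • (f ((2 : ℝ) • x') - (8 : ℝ) • f x') := by module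
    rw [e, norm_smul] at h
    simp only [Real.norm_ofNat] at h
    linarith
  have e1 : ∀ (n : ℕ) (x : E), ((2 : ℝ) ^ (n + 1)) • x = (2 : ℝ) • (((2 : ℝ) ^ n) • x) := by
    intro n x
    rw [pow_succ, mul_comm, mul_smul]
  have hstep : ∀ (x : E) (n : ℕ), dist (g x n) (g x (n + 1)) ≤ a x n / 16 := by
    intro x n
    rw [dist_eq_norm]
    have e2 : g x n - g x (n + 1)
        = -(((8 : ℝ)⁻¹ ^ (n + 1)) •
            (f ((2 : ℝ) • (((2 : ℝ) ^ n) • x)) - (8 : ℝ) • f (((2 : ℝ) ^ n) • x))) := by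
      simp only [hg, e1 n x]
      module
    rw [e2, norm_neg, norm_smul, norm_pow, norm_inv, Real.norm_ofNat]
    have hb := key (((2 : ℝ) ^ n) • x)
    have hpos : (0 : ℝ) < (8 : ℝ)⁻¹ ^ (n + 1) := by positivity
    calc (8 : ℝ)⁻¹ ^ (n + 1) * ‖f ((2 : ℝ) • (((2 : ℝ) ^ n) • x)) - (8 : ℝ) • f (((2 : ℝ) ^ n) • x)‖
        ≤ (8 : ℝ)⁻¹ ^ (n + 1) * (φ (((2 : ℝ) ^ n) • x) 0 / 2) := by
          exact mul_le_mul_of_nonneg_left hb (le_of_lt hpos)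
      _ = a x n / 16 := by
          simp only [ha]
          rw [inv_pow, pow_succ, mul_inv, div_div]
          ring
  have hcauchy : ∀ x : E, CauchySeq (g x) := fun x =>
    cauchySeq_of_dist_le_of_summable _ (hstep x) ((hsum0 x).div_const 16)
  choose D hDt using fun x => cauchySeq_tendsto_of_complete (hcauchy x)
  have hDbound : ∀ x : E, ‖f x - D x‖ ≤ (1 / 16) * ∑' k : ℕ, a x k := by
    intro x
    have h := dist_le_tsum_of_dist_le_of_tendsto₀ _ (hstep x) ((hsum0 x).div_const 16) (hDt x)
    have hg0 : g x 0 = f x := by simp [hg]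
    rw [hg0, dist_eq_norm] at h
    calc ‖f x - D x‖ ≤ ∑' n, a x n / 16 := h
      _ = (1 / 16) * ∑' k : ℕ, a x k := by rw [tsum_div_const]; ring
  -- arg rewriting lemmas
  have hA : ∀ (n : ℕ) (x y : E), ((2 : ℝ) ^ n) • ((2 : ℝ) • x + y)
      = (2 : ℝ) • (((2 : ℝ) ^ n) • x) + ((2 : ℝ) ^ n) • y := by
    intro n x y
    rw [smul_add, smul_smul, smul_smul, mul_comm]
  have hS : ∀ (n : ℕ) (x y : E), ((2 : ℝ) ^ n) • ((2 : ℝ) • x - y)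
      = (2 : ℝ) • (((2 : ℝ) ^ n) • x) - ((2 : ℝ) ^ n) • y := by
    intro n x y
    rw [smul_sub, smul_smul, smul_smul, mul_comm]
  have hDeq : ∀ x y : E, D ((2 : ℝ) • x + y) + D ((2 : ℝ) • x - y)
      = (2 : ℝ) • D (x + y) + (2 : ℝ) • D (x - y) + (12 : ℝ) • D x := by
    intro x y
    set s : ℕ → F := fun n => g ((2 : ℝ) • x + y) n + g ((2 : ℝ) • x - y) n
      - (2 : ℝ) • g (x + y) n - (2 : ℝ) • g (x - y) n - (12 : ℝ) • g x n with hs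
    have h1 : Tendsto s atTop (𝓝 (D ((2 : ℝ) • x + y) + D ((2 : ℝ) • x - y)
        - (2 : ℝ) • D (x + y) - (2 : ℝ) • D (x - y) - (12 : ℝ) • D x)) := by
      exact ((((hDt _).add (hDt _)).sub ((hDt _).const_smul _)).sub
        ((hDt _).const_smul _)).sub ((hDt _).const_smul _)
    have h2 : Tendsto s atTop (𝓝 0) := by
      apply squeeze_zero_norm _ (hsum x y).tendsto_atTop_zero
      intro n
      have es : s n = ((8 : ℝ)⁻¹ ^ n) •
          (f ((2 : ℝ) • (((2 : ℝ) ^ n) • x) + ((2 : ℝ) ^ n) • y)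
            + f ((2 : ℝ) • (((2 : ℝ) ^ n) • x) - ((2 : ℝ) ^ n) • y)
            - (2 : ℝ) • f (((2 : ℝ) ^ n) • x + ((2 : ℝ) ^ n) • y)
            - (2 : ℝ) • f (((2 : ℝ) ^ n) • x - ((2 : ℝ) ^ n) • y)
            - (12 : ℝ) • f (((2 : ℝ) ^ n) • x)) := by
        simp only [hs, hg]
        rw [hA n x y, hS n x y, smul_add ((2 : ℝ) ^ n) x y, smul_sub ((2 : ℝ) ^ n) x y]
        module
      rw [es, norm_smul, norm_pow, norm_inv, Real.norm_ofNat, inv_pow, div_eq_inv_mul]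
      exact mul_le_mul_of_nonneg_left (hf (((2 : ℝ) ^ n) • x) (((2 : ℝ) ^ n) • y))
        (by positivity)
    have h3 := tendsto_nhds_unique h1 h2
    have e0 : D ((2 : ℝ) • x + y) + D ((2 : ℝ) • x - y)
        - (2 : ℝ) • D (x + y) - (2 : ℝ) • D (x - y) - (12 : ℝ) • D x
        = (D ((2 : ℝ) • x + y) + D ((2 : ℝ) • x - y))
          - ((2 : ℝ) • D (x + y) + (2 : ℝ) • D (x - y) + (12 : ℝ) • D x) := by module
    rw [e0, sub_eq_zero] at h3
    exact h3
  -- scaling for any cubic solution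
  have hscale : ∀ (D' : E → F), (∀ x y : E, D' ((2 : ℝ) • x + y) + D' ((2 : ℝ) • x - y)
      = (2 : ℝ) • D' (x + y) + (2 : ℝ) • D' (x - y) + (12 : ℝ) • D' x) →
      ∀ (n : ℕ) (x : E), D' (((2 : ℝ) ^ n) • x) = ((8 : ℝ) ^ n) • D' x := by
    intro D' hc
    have h0 : D' 0 = 0 := by
      have h := hc 0 0
      simp only [smul_zero, add_zero, sub_zero] at h
      have e : (14 : ℝ) • D' 0
          = ((2 : ℝ) • D' 0 + (2 : ℝ) • D' 0 + (12 : ℝ) • D' 0) - (D' 0 + D' 0) := by module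
      rw [← h, sub_self] at e
      have h14 : (14 : ℝ) ≠ 0 := by norm_num
      exact (smul_eq_zero.mp e).resolve_left h14
    have h2 : ∀ x : E, D' ((2 : ℝ) • x) = (8 : ℝ) • D' x := by
      intro x
      have h := hc x 0
      simp only [add_zero, sub_zero] at h
      have e : (2 : ℝ) • (D' ((2 : ℝ) • x) - (8 : ℝ) • D' x)
          = (D' ((2 : ℝ) • x) + D' ((2 : ℝ) • x))
            - ((2 : ℝ) • D' x + (2 : ℝ) • D' x + (12 : ℝ) • D' x) := by module
      rw [h, sub_self] at e
      have h2' : (2 : ℝ) ≠ 0 := by norm_num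
      have := (smul_eq_zero.mp e).resolve_left h2'
      exact sub_eq_zero.mp this
    intro n
    induction n with
    | zero => intro x; simp
    | succ n ih =>
        intro x
        rw [e1 n x, h2, ih, smul_smul, pow_succ, mul_comm]
  refine ⟨D, ⟨hDeq, fun x => hDbound x⟩, ?_⟩
  rintro D' ⟨hc', hb'⟩
  funext x
  have hDscale := hscale D hDeq
  have hD'scale := hscale D' hc'
  have hbnd : ∀ n : ℕ, ‖D' x - D x‖ ≤ (1 / 8) * ∑' k : ℕ, a x (k + n) := by
    intro n
    have hsumsh : Summable fun k => a x (k + n) := (summable_nat_add_iff n).mpr (hsum0 x)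
    have ev : ∀ k : ℕ, φ (((2 : ℝ) ^ k) • (((2 : ℝ) ^ n) • x)) 0 / 8 ^ k
        = (8 : ℝ) ^ n * a x (k + n) := by
      intro k
      rw [smul_smul, ← pow_add, ha]
      simp only [add_comm k n]
      rw [pow_add]
      have h8 : ((8 : ℝ) ^ n) ≠ 0 := by positivity
      have h8' : ((8 : ℝ) ^ k) ≠ 0 := by positivity
      field_simp
      rw [pow_add]
      ring
    have hts : (∑' k : ℕ, φ (((2 : ℝ) ^ k) • (((2 : ℝ) ^ n) • x)) 0 / 8 ^ k)
        = (8 : ℝ) ^ n * ∑' k : ℕ, a x (k + n) := by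
      rw [← tsum_mul_left]
      exact tsum_congr ev
    have hb1 := hb' (((2 : ℝ) ^ n) • x)
    have hb2 := hDbound (((2 : ℝ) ^ n) • x)
    rw [hts] at hb1
    have hb2' : ‖f (((2 : ℝ) ^ n) • x) - D (((2 : ℝ) ^ n) • x)‖
        ≤ (1 / 16) * ((8 : ℝ) ^ n * ∑' k : ℕ, a x (k + n)) := by
      have e3 : (∑' k : ℕ, a (((2 : ℝ) ^ n) • x) k)
          = (8 : ℝ) ^ n * ∑' k : ℕ, a x (k + n) := by
        rw [← hts]
      rw [e3] at hb2
      exact hb2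
    have enorm : ((8 : ℝ) ^ n) • (D' x - D x)
        = (D' (((2 : ℝ) ^ n) • x) - f (((2 : ℝ) ^ n) • x))
          + (f (((2 : ℝ) ^ n) • x) - D (((2 : ℝ) ^ n) • x)) := by
      rw [hDscale n x, hD'scale n x]
      module
    have h8 : (0 : ℝ) < (8 : ℝ) ^ n := by positivity
    have hn : (8 : ℝ) ^ n * ‖D' x - D x‖
        ≤ (1 / 8) * ((8 : ℝ) ^ n * ∑' k : ℕ, a x (k + n)) := by
      have := norm_add_le (D' (((2 : ℝ) ^ n) • x) - f (((2 : ℝ) ^ n) • x))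
        (f (((2 : ℝ) ^ n) • x) - D (((2 : ℝ) ^ n) • x))
      rw [← enorm] at this
      rw [norm_smul, norm_pow, Real.norm_ofNat] at this
      have hb1' : ‖D' (((2 : ℝ) ^ n) • x) - f (((2 : ℝ) ^ n) • x)‖
          ≤ (1 / 16) * ((8 : ℝ) ^ n * ∑' k : ℕ, a x (k + n)) := by
        rw [norm_sub_rev]
        exact hb1
      linarith
    have h' : (8:ℝ)^n * ‖D' x - D x‖ ≤ (8:ℝ)^n * ((1/8) * ∑' k : ℕ, a x (k + n)) := by
      linarith
    exact le_of_mul_le_mul_left h' h8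
  have htend : Tendsto (fun n : ℕ => (1 / 8 : ℝ) * ∑' k : ℕ, a x (k + n)) atTop (𝓝 0) := by
    have := (tendsto_sum_nat_add (a x)).const_mul (1 / 8 : ℝ)
    simpa using this
  have hle : ‖D' x - D x‖ ≤ 0 := ge_of_tendsto' htend hbnd
  have : D' x - D x = 0 := by
    rw [← norm_le_zero_iff]
    exact hle
  exact sub_eq_zero.mp this
end

section
/- Let E be a normed space, F a Banach space, and φ : E × E → [0,∞) with φ̃(x,y) := Σ_{k=1}^∞ 8^k φ(x/2^k, y/2^k) < ∞ for all x, y. If f : E → F satisfies f(0) = 0 and ‖f(2x+y) + f(2x−y) − 2f(x+y) − 2f(x−y) − 12f(x)‖ ≤ φ(x,y) for all x, y, then there exists a unique map D : E → F satisfying the cubic functional equation with ‖f(x) − D(x)‖ ≤ (1/16) φ̃(x,0) for all x ∈ E, where D(x) = lim_{n→∞} 8ⁿ f(x/2ⁿ). -/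
open Filter Topology

theorem cubic_stability_general_div {E F : Type*}
    [NormedAddCommGroup E] [NormedSpace ℝ E]
    [NormedAddCommGroup F] [NormedSpace ℝ F] [CompleteSpace F]
    (φ : E → E → ℝ) (hφ0 : ∀ x y, 0 ≤ φ x y)
    (hsum : ∀ x y : E, Summable (fun k : ℕ =>
      (8 : ℝ) ^ (k + 1) * φ ((((2 : ℝ) ^ (k + 1))⁻¹) • x) ((((2 : ℝ) ^ (k + 1))⁻¹) • y)))
    (f : E → F) (hf0 : f 0 = 0)
    (hf : ∀ x y : E,
      ‖f ((2 : ℝ) • x + y) + f ((2 : ℝ) • x - y) - (2 : ℝ) • f (x + y)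
        - (2 : ℝ) • f (x - y) - (12 : ℝ) • f x‖ ≤ φ x y) :
    ∃! D : E → F,
      (∀ x : E, Tendsto (fun n : ℕ => ((8 : ℝ) ^ n) • f ((((2 : ℝ) ^ n)⁻¹) • x))
        atTop (𝓝 (D x))) ∧
      (∀ x y : E, D ((2 : ℝ) • x + y) + D ((2 : ℝ) • x - y)
        = (2 : ℝ) • D (x + y) + (2 : ℝ) • D (x - y) + (12 : ℝ) • D x) ∧
      (∀ x : E, ‖f x - D x‖ ≤
        (1 / 16) * ∑' k : ℕ, (8 : ℝ) ^ (k + 1) * φ ((((2 : ℝ) ^ (k + 1))⁻¹) • x) 0) := by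
  classical
  set c : ℕ → E → E := fun n x => (((2 : ℝ) ^ n)⁻¹) • x with hc
  set g : ℕ → E → F := fun n x => ((8 : ℝ) ^ n) • f (c n x) with hg
  have hc0 : ∀ x, c 0 x = x := by intro x; simp [hc]
  have hcsucc : ∀ n x, c (n + 1) x = (2 : ℝ)⁻¹ • c n x := by
    intro n x
    simp only [hc, smul_smul]
    congr 1
    rw [pow_succ, mul_inv]
    ring
  have key : ∀ x : E, ‖f x - (8 : ℝ) • f (((2 : ℝ)⁻¹) • x)‖ ≤ (1 / 2) * φ (((2 : ℝ)⁻¹) • x) 0 := by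
    intro x
    have h := hf (((2 : ℝ)⁻¹) • x) 0
    have h2 : (2 : ℝ) • ((2 : ℝ)⁻¹ • x) = x := by
      rw [smul_smul]; norm_num
    simp only [h2, add_zero, sub_zero] at h
    have heq : f x + f x - (2 : ℝ) • f ((2 : ℝ)⁻¹ • x) - (2 : ℝ) • f ((2 : ℝ)⁻¹ • x)
        - (12 : ℝ) • f ((2 : ℝ)⁻¹ • x)
        = (2 : ℝ) • (f x - (8 : ℝ) • f ((2 : ℝ)⁻¹ • x)) := by module
    rw [heq, norm_smul] at h
    rw [Real.norm_ofNat] at h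
    linarith
  set d : E → ℕ → ℝ := fun x n => (1 / 16) * ((8 : ℝ) ^ (n + 1) * φ (c (n + 1) x) 0) with hd
  have hdsum : ∀ x, Summable (d x) := by
    intro x
    have := (hsum x 0).mul_left (1 / 16)
    simpa [hd, hc, smul_zero] using this
  have hstep : ∀ x n, dist (g n x) (g (n + 1) x) ≤ d x n := by
    intro x n
    rw [dist_eq_norm]
    have heq2 : g n x - g (n + 1) x = ((8 : ℝ) ^ n) • (f (c n x) - (8 : ℝ) • f ((2 : ℝ)⁻¹ • c n x)) := by
      simp only [hg, hcsucc, pow_succ]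
      module
    rw [heq2, norm_smul, norm_pow, Real.norm_ofNat]
    have hk := key (c n x)
    rw [← hcsucc n x] at hk ⊢
    calc (8 : ℝ) ^ n * ‖f (c n x) - (8 : ℝ) • f (c (n + 1) x)‖
        ≤ (8 : ℝ) ^ n * ((1 / 2) * φ (c (n + 1) x) 0) := by
          apply mul_le_mul_of_nonneg_left hk (by positivity)
      _ = d x n := by rw [hd]; ring
  have hcauchy : ∀ x, CauchySeq (fun n => g n x) := fun x =>
    cauchySeq_of_dist_le_of_summable _ (hstep x) (hdsum x)
  choose D hD using fun x => cauchySeq_tendsto_of_complete (hcauchy x)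
  have htend : ∀ x : E, Tendsto (fun n : ℕ => ((8 : ℝ) ^ n) • f ((((2 : ℝ) ^ n)⁻¹) • x))
      atTop (𝓝 (D x)) := fun x => hD x
  refine ⟨D, ⟨htend, ?_, ?_⟩, ?_⟩
  · -- functional equation
    intro x y
    have hcadd : ∀ n (a b : E), c n (a + b) = c n a + c n b := by
      intro n a b; simp [hc, smul_add]
    have hcsub : ∀ n (a b : E), c n (a - b) = c n a - c n b := by
      intro n a b; simp [hc, smul_sub]
    have hcsmul : ∀ n (a : E), c n ((2 : ℝ) • a) = (2 : ℝ) • c n a := by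
      intro n a; simp [hc, smul_smul, mul_comm]
    set h : ℕ → F := fun n => g n ((2 : ℝ) • x + y) + g n ((2 : ℝ) • x - y)
      - (2 : ℝ) • g n (x + y) - (2 : ℝ) • g n (x - y) - (12 : ℝ) • g n x with hh
    have hbound : ∀ n, ‖h n‖ ≤ (8 : ℝ) ^ n * φ (c n x) (c n y) := by
      intro n
      have heq : h n = ((8 : ℝ) ^ n) • (f ((2 : ℝ) • c n x + c n y) + f ((2 : ℝ) • c n x - c n y)
          - (2 : ℝ) • f (c n x + c n y) - (2 : ℝ) • f (c n x - c n y) - (12 : ℝ) • f (c n x)) := by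
        simp only [hh, hg, hcadd, hcsub, hcsmul]
        module
      rw [heq, norm_smul, norm_pow, Real.norm_ofNat]
      exact mul_le_mul_of_nonneg_left (hf (c n x) (c n y)) (by positivity)
    have hzero : Tendsto (fun n => (8 : ℝ) ^ n * φ (c n x) (c n y)) atTop (𝓝 0) := by
      have h1 : Tendsto (fun k : ℕ => (8 : ℝ) ^ (k + 1) * φ (c (k + 1) x) (c (k + 1) y))
          atTop (𝓝 0) := by
        have := (hsum x y).tendsto_atTop_zero
        simpa [hc] using this
      exact (tendsto_add_atTop_iff_nat 1).mp h1
    have hTlim : Tendsto h atTop (𝓝 (D ((2 : ℝ) • x + y) + D ((2 : ℝ) • x - y)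
        - (2 : ℝ) • D (x + y) - (2 : ℝ) • D (x - y) - (12 : ℝ) • D x)) := by
      apply Tendsto.sub
      apply Tendsto.sub
      apply Tendsto.sub
      apply Tendsto.add (hD _) (hD _)
      exact (hD _).const_smul _
      exact (hD _).const_smul _
      exact (hD _).const_smul _
    have hTnorm : Tendsto (fun n => ‖h n‖) atTop (𝓝 ‖D ((2 : ℝ) • x + y) + D ((2 : ℝ) • x - y)
        - (2 : ℝ) • D (x + y) - (2 : ℝ) • D (x - y) - (12 : ℝ) • D x‖) := hTlim.norm
    have hTnorm0 : Tendsto (fun n => ‖h n‖) atTop (𝓝 0) :=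
      squeeze_zero (fun n => norm_nonneg _) hbound hzero
    have hT0 : ‖D ((2 : ℝ) • x + y) + D ((2 : ℝ) • x - y)
        - (2 : ℝ) • D (x + y) - (2 : ℝ) • D (x - y) - (12 : ℝ) • D x‖ = 0 :=
      tendsto_nhds_unique hTnorm hTnorm0
    have := norm_eq_zero.mp hT0
    linear_combination (norm := module) this
  · -- error bound
    intro x
    have hb : dist (g 0 x) (D x) ≤ ∑' n, d x n :=
      dist_le_tsum_of_dist_le_of_tendsto₀ _ (hstep x) (hdsum x) (hD x)
    have hg0 : g 0 x = f x := by simp [hg, hc0]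
    rw [hg0, dist_eq_norm] at hb
    calc ‖f x - D x‖ ≤ ∑' n, d x n := hb
      _ = (1 / 16) * ∑' k : ℕ, (8 : ℝ) ^ (k + 1) * φ ((((2 : ℝ) ^ (k + 1))⁻¹) • x) 0 := by
        rw [hd]
        rw [tsum_mul_left]
  · -- uniqueness
    intro D' ⟨h1, _, _⟩
    funext x
    exact tendsto_nhds_unique (h1 x) (hD x)
end

section
/- Let A be a Banach algebra, X a Banach A-bimodule, and φ : A × A → [0,∞) with lim_{n→∞} φ(2ⁿa, 2ⁿb)/8ⁿ = 0 for all a, b. If fₙ : A → X is a sequence converging pointwise to D : A → X and f : A → X satisfies ‖f(cd) − f(c)·d³ − c³·f(d)‖ ≤ φ(c,d), and D(a) = lim_{n→∞} f(2ⁿa)/8ⁿ, then D(cd) = D(c)·d³ + c³·D(d) for all c, d ∈ A. -/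
open Filter Topology

/-!
Write `Δ(c, d) = f(cd) - f(c)·d³ - c³·f(d)` and `fₙ(a) = f(2ⁿa)/8ⁿ`. Since `(2ⁿc)(2ⁿd) = 4ⁿcd` and
`(2ⁿa)³ = 8ⁿa³`, we get `Δ(2ⁿc, 2ⁿd) = 64ⁿ (f₂ₙ(cd) - fₙ(c)·d³ - c³·fₙ(d))`, so the bracket has norm
at most `φ(2ⁿc, 2ⁿd)/8ⁿ · 8⁻ⁿ → 0`. It also tends to `D(cd) - D(c)·d³ - c³·D(d)`, by continuity of
the module actions.
-/

/-- No compatibility between the `R`-action and the `B`-action on `X` is assumed, so scalars are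
moved across the `B`-action only as natural numbers. -/
theorem natCast_smul_smul_natCast_smul {R B X : Type*} [CommSemiring R] [Semiring B]
    [Algebra R B] [AddCommMonoid X] [Module R X] [Module B X] (k m : ℕ) (b : B) (x : X) :
    ((k : R) • b) • ((m : R) • x) = ((k * m : ℕ) : R) • (b • x) := by
  simp only [Nat.cast_smul_eq_nsmul, smul_assoc, smul_comm b, smul_smul]

theorem smul_mul_smul_mul_smul {R B : Type*} [CommSemiring R] [Semiring B] [Algebra R B]
    (z : R) (a : B) : (z • a) * (z • a) * (z • a) = z ^ 3 • (a * a * a) := by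
  rw [smul_mul_smul_comm, smul_mul_smul_comm, pow_three, mul_assoc]

noncomputable def cubicRescale {A X : Type*} [SMul ℂ A] [AddCommGroup X] [Module ℂ X]
    (f : A → X) (n : ℕ) (a : A) : X :=
  ((8 : ℂ) ^ n)⁻¹ • f ((2 : ℂ) ^ n • a)

theorem apply_two_pow_smul_eq {A X : Type*} [SMul ℂ A] [AddCommGroup X] [Module ℂ X]
    (f : A → X) (n : ℕ) (a : A) :
    f ((2 : ℂ) ^ n • a) = ((8 ^ n : ℕ) : ℂ) • cubicRescale f n a := by
  rw [cubicRescale, Nat.cast_pow, Nat.cast_ofNat, smul_inv_smul₀ (by norm_num)]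

theorem two_pow_smul_cube {A : Type*} [Ring A] [Algebra ℂ A] (n : ℕ) (a : A) :
    ((2 : ℂ) ^ n • a) * ((2 : ℂ) ^ n • a) * ((2 : ℂ) ^ n • a) =
      ((8 ^ n : ℕ) : ℂ) • (a * a * a) := by
  rw [smul_mul_smul_mul_smul, ← pow_mul, mul_comm, pow_mul]
  norm_num

section

variable {A X : Type*} [Ring A] [Algebra ℂ A] [AddCommGroup X] [Module ℂ X]
  [Module A X] [Module Aᵐᵒᵖ X]

open MulOpposite

def cubicDefect (f : A → X) (c d : A) : X :=
  f (c * d) - op (d * d * d) • f c - (c * c * c) • f d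

theorem cubicDefect_two_pow_smul (f : A → X) (n : ℕ) (c d : A) :
    cubicDefect f ((2 : ℂ) ^ n • c) ((2 : ℂ) ^ n • d) =
      ((8 ^ (2 * n) : ℕ) : ℂ) • (cubicRescale f (2 * n) (c * d)
        - op (d * d * d) • cubicRescale f n c - (c * c * c) • cubicRescale f n d) := by
  have h8 : 8 ^ n * 8 ^ n = 8 ^ (2 * n) := by ring
  rw [cubicDefect, smul_mul_smul_comm, ← pow_add, ← two_mul, two_pow_smul_cube,
    two_pow_smul_cube, op_smul, apply_two_pow_smul_eq f, apply_two_pow_smul_eq f n,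
    apply_two_pow_smul_eq f n, natCast_smul_smul_natCast_smul, natCast_smul_smul_natCast_smul, h8,
    smul_sub, smul_sub]

end

section

variable {A X : Type*} [Ring A] [Algebra ℂ A] [NormedAddCommGroup X] [NormedSpace ℂ X]
  [Module A X] [Module Aᵐᵒᵖ X]

open MulOpposite

theorem norm_cubicRescale_defect_le {f : A → X} {φ : A → A → ℝ}
    (hf : ∀ c d, ‖cubicDefect f c d‖ ≤ φ c d) (n : ℕ) (c d : A) :
    ‖cubicRescale f (2 * n) (c * d) - op (d * d * d) • cubicRescale f n c
        - (c * c * c) • cubicRescale f n d‖ ≤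
      φ ((2 : ℂ) ^ n • c) ((2 : ℂ) ^ n • d) / 8 ^ n * (1 / 8) ^ n := by
  have h := hf ((2 : ℂ) ^ n • c) ((2 : ℂ) ^ n • d)
  rw [cubicDefect_two_pow_smul, norm_smul, RCLike.norm_natCast, Nat.cast_pow] at h
  rw [div_mul_eq_mul_div, one_div_pow, mul_one_div, div_div, ← pow_add, ← two_mul]
  exact (le_div_iff₀' (by positivity)).mpr (mod_cast h)

theorem tendsto_cubicRescale_defect_zero {f : A → X} {φ : A → A → ℝ}
    (hf : ∀ c d, ‖cubicDefect f c d‖ ≤ φ c d) {c d : A}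
    (hφ : Tendsto (fun n : ℕ => φ ((2 : ℂ) ^ n • c) ((2 : ℂ) ^ n • d) / 8 ^ n) atTop (𝓝 0)) :
    Tendsto (fun n => cubicRescale f (2 * n) (c * d) - op (d * d * d) • cubicRescale f n c
        - (c * c * c) • cubicRescale f n d) atTop (𝓝 0) := by
  refine squeeze_zero_norm (norm_cubicRescale_defect_le hf · c d) ?_
  simpa using hφ.mul (tendsto_pow_atTop_nhds_zero_of_lt_one (by norm_num : (0 : ℝ) ≤ 1 / 8)
    (by norm_num))

end

theorem cubic_derivation_limit_general {A X : Type*}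
    [NormedRing A] [NormedAlgebra ℂ A]
    [NormedAddCommGroup X] [NormedSpace ℂ X]
    [Module A X] [Module Aᵐᵒᵖ X]
    [IsBoundedSMul A X] [IsBoundedSMul Aᵐᵒᵖ X]
    (φ : A → A → ℝ)
    (hφ : ∀ a b : A, Tendsto (fun n : ℕ => φ (((2 : ℂ) ^ n) • a) (((2 : ℂ) ^ n) • b) / 8 ^ n)
      atTop (𝓝 0))
    (f : A → X) (D : A → X) (fs : ℕ → A → X)
    (hfs : ∀ n : ℕ, ∀ a : A, fs n a = ((8 : ℂ) ^ n)⁻¹ • f (((2 : ℂ) ^ n) • a))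
    (hconv : ∀ a : A, Tendsto (fun n : ℕ => fs n a) atTop (𝓝 (D a)))
    (hf : ∀ c d : A, ‖f (c * d) - MulOpposite.op (d * d * d) • f c - (c * c * c) • f d‖
      ≤ φ c d) :
    ∀ c d : A, D (c * d) = MulOpposite.op (d * d * d) • D c + (c * c * c) • D d := by
  intro c d
  obtain rfl : fs = cubicRescale f := funext₂ hfs
  have hdefect := tendsto_cubicRescale_defect_zero hf (hφ c d)
  have hlim := (((hconv (c * d)).comp (tendsto_id.const_mul_atTop' two_pos)).sub
    ((hconv c).const_smul (MulOpposite.op (d * d * d)))).sub ((hconv d).const_smul (c * c * c))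
  have h := tendsto_nhds_unique hlim hdefect
  rwa [sub_sub, sub_eq_zero] at h

theorem cubic_derivation_limit {A X : Type*}
    [NormedRing A] [NormedAlgebra ℂ A] [CompleteSpace A]
    [NormedAddCommGroup X] [NormedSpace ℂ X] [CompleteSpace X]
    [Module A X] [Module Aᵐᵒᵖ X] [SMulCommClass A Aᵐᵒᵖ X]
    [IsBoundedSMul A X] [IsBoundedSMul Aᵐᵒᵖ X]
    (φ : A → A → ℝ)
    (hφ : ∀ a b : A, Tendsto (fun n : ℕ => φ (((2 : ℂ) ^ n) • a) (((2 : ℂ) ^ n) • b) / 8 ^ n)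
      atTop (𝓝 0))
    (f : A → X) (D : A → X) (fs : ℕ → A → X)
    (hfs : ∀ n : ℕ, ∀ a : A, fs n a = ((8 : ℂ) ^ n)⁻¹ • f (((2 : ℂ) ^ n) • a))
    (hconv : ∀ a : A, Tendsto (fun n : ℕ => fs n a) atTop (𝓝 (D a)))
    (hf : ∀ c d : A, ‖f (c * d) - MulOpposite.op (d * d * d) • f c - (c * c * c) • f d‖
      ≤ φ c d) :
    ∀ c d : A, D (c * d) = MulOpposite.op (d * d * d) • D c + (c * c * c) • D d :=
  cubic_derivation_limit_general φ hφ f D fs hfs hconv hf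
end

section
/- Let E be a normed space, F a Banach space, φ : E × E → [0,∞) continuous, and k ∈ (0,1) with φ(2a, 2b) ≤ 8k φ(a,b) for all a, b. If f : E → F with f(0) = 0 satisfies ‖f(2a+b) + f(2a−b) − 2f(a+b) − 2f(a−b) − 12f(a)‖ ≤ φ(a,b) for all a, b ∈ E, then there exists a unique map D : E → F satisfying the cubic functional equation such that ‖f(a) − D(a)‖ ≤ φ(a,0)/(16(1−k)) for all a ∈ E. -/
open Filter Topology

theorem cubic_stability_fixed_point {E F : Type*}
    [NormedAddCommGroup E] [NormedSpace ℝ E]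
    [NormedAddCommGroup F] [NormedSpace ℝ F] [CompleteSpace F]
    (φ : E → E → ℝ) (hφ0 : ∀ a b, 0 ≤ φ a b)
    (hφcont : Continuous fun p : E × E => φ p.1 p.2)
    (k : ℝ) (hk0 : 0 < k) (hk1 : k < 1)
    (hφ : ∀ a b : E, φ ((2 : ℝ) • a) ((2 : ℝ) • b) ≤ 8 * k * φ a b)
    (f : E → F) (hf0 : f 0 = 0)
    (hf : ∀ a b : E,
      ‖f ((2 : ℝ) • a + b) + f ((2 : ℝ) • a - b) - (2 : ℝ) • f (a + b)
        - (2 : ℝ) • f (a - b) - (12 : ℝ) • f a‖ ≤ φ a b) :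
    ∃! D : E → F,
      (∀ a b : E, D ((2 : ℝ) • a + b) + D ((2 : ℝ) • a - b)
        = (2 : ℝ) • D (a + b) + (2 : ℝ) • D (a - b) + (12 : ℝ) • D a) ∧
      (∀ a : E, ‖f a - D a‖ ≤ φ a 0 / (16 * (1 - k))) := by
  -- iterated control of φ
  have hφiter : ∀ (n : ℕ) (a b : E),
      φ ((2 : ℝ) ^ n • a) ((2 : ℝ) ^ n • b) ≤ (8 * k) ^ n * φ a b := by
    intro n
    induction n with
    | zero => intro a b; simp
    | succ n ih =>
      intro a b
      have h1 : (2 : ℝ) ^ (n + 1) • a = (2 : ℝ) • ((2 : ℝ) ^ n • a) := by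
        rw [smul_smul, pow_succ, mul_comm]
      have h2 : (2 : ℝ) ^ (n + 1) • b = (2 : ℝ) • ((2 : ℝ) ^ n • b) := by
        rw [smul_smul, pow_succ, mul_comm]
      rw [h1, h2]
      calc φ ((2 : ℝ) • ((2 : ℝ) ^ n • a)) ((2 : ℝ) • ((2 : ℝ) ^ n • b))
          ≤ 8 * k * φ ((2 : ℝ) ^ n • a) ((2 : ℝ) ^ n • b) := hφ _ _
        _ ≤ 8 * k * ((8 * k) ^ n * φ a b) := by
            have h8k : (0 : ℝ) ≤ 8 * k := by positivity
            exact mul_le_mul_of_nonneg_left (ih a b) h8k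
        _ = (8 * k) ^ (n + 1) * φ a b := by ring
  -- basic step
  have hstep : ∀ a : E, ‖(8 : ℝ)⁻¹ • f ((2 : ℝ) • a) - f a‖ ≤ φ a 0 / 16 := by
    intro a
    have h := hf a 0
    simp only [add_zero, sub_zero] at h
    have hkey : (16 : ℝ) • ((8 : ℝ)⁻¹ • f ((2 : ℝ) • a) - f a)
        = f ((2 : ℝ) • a) + f ((2 : ℝ) • a) - (2 : ℝ) • f a - (2 : ℝ) • f a
          - (12 : ℝ) • f a := by
      rw [smul_sub, smul_smul]
      norm_num
      module
    have h16 : ‖(16 : ℝ) • ((8 : ℝ)⁻¹ • f ((2 : ℝ) • a) - f a)‖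
        = 16 * ‖(8 : ℝ)⁻¹ • f ((2 : ℝ) • a) - f a‖ := by
      rw [norm_smul]; norm_num
    have h' : 16 * ‖(8 : ℝ)⁻¹ • f ((2 : ℝ) • a) - f a‖ ≤ φ a 0 := by
      rw [← h16, hkey]; exact h
    linarith
  -- the approximating sequence
  set g : ℕ → E → F := fun n a => ((8 : ℝ)⁻¹) ^ n • f ((2 : ℝ) ^ n • a) with hgdef
  have hgdist : ∀ (a : E) (n : ℕ),
      dist (g n a) (g (n + 1) a) ≤ (φ a 0 / 16) * k ^ n := by
    intro a n
    have harg : (2 : ℝ) ^ (n + 1) • a = (2 : ℝ) • ((2 : ℝ) ^ n • a) := by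
      rw [smul_smul, pow_succ, mul_comm]
    have hrw : g n a - g (n + 1) a
        = ((8 : ℝ)⁻¹) ^ n • (f ((2 : ℝ) ^ n • a)
            - (8 : ℝ)⁻¹ • f ((2 : ℝ) • ((2 : ℝ) ^ n • a))) := by
      simp only [hgdef]
      rw [harg, smul_sub, pow_succ, mul_smul]
    rw [dist_eq_norm, hrw, norm_smul]
    have h8 : ‖((8 : ℝ)⁻¹) ^ n‖ = ((8 : ℝ)⁻¹) ^ n := by
      rw [Real.norm_eq_abs, abs_of_pos]; positivity
    rw [h8, norm_sub_rev]
    have hb := hstep ((2 : ℝ) ^ n • a)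
    have hφn : φ ((2 : ℝ) ^ n • a) 0 ≤ (8 * k) ^ n * φ a 0 := by
      have := hφiter n a 0
      simpa using this
    calc ((8 : ℝ)⁻¹) ^ n * ‖(8 : ℝ)⁻¹ • f ((2 : ℝ) • ((2 : ℝ) ^ n • a))
          - f ((2 : ℝ) ^ n • a)‖
        ≤ ((8 : ℝ)⁻¹) ^ n * (φ ((2 : ℝ) ^ n • a) 0 / 16) := by
          apply mul_le_mul_of_nonneg_left hb; positivity
      _ ≤ ((8 : ℝ)⁻¹) ^ n * ((8 * k) ^ n * φ a 0 / 16) := by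
          apply mul_le_mul_of_nonneg_left _ (by positivity)
          exact div_le_div_of_nonneg_right hφn (by norm_num)
      _ = (φ a 0 / 16) * k ^ n := by
          have hpow : ((8 : ℝ)⁻¹) ^ n * (8 * k) ^ n = k ^ n := by
            rw [← mul_pow]; congr 1; ring
          calc ((8 : ℝ)⁻¹) ^ n * ((8 * k) ^ n * φ a 0 / 16)
              = ((8 : ℝ)⁻¹) ^ n * (8 * k) ^ n * φ a 0 / 16 := by ring
            _ = (φ a 0 / 16) * k ^ n := by rw [hpow]; ring
  have hcauchy : ∀ a : E, CauchySeq fun n => g n a := fun a =>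
    cauchySeq_of_le_geometric k (φ a 0 / 16) hk1 (hgdist a)
  have hlim : ∀ a : E, ∃ L : F, Tendsto (fun n => g n a) atTop (𝓝 L) := fun a =>
    cauchySeq_tendsto_of_complete (hcauchy a)
  choose D hD using hlim
  -- the bound
  have hbound : ∀ a : E, ‖f a - D a‖ ≤ φ a 0 / (16 * (1 - k)) := by
    intro a
    have h := dist_le_of_le_geometric_of_tendsto₀ k (φ a 0 / 16) hk1 (hgdist a) (hD a)
    have hg0 : g 0 a = f a := by simp [hgdef]
    rw [hg0, dist_eq_norm] at h
    calc ‖f a - D a‖ ≤ φ a 0 / 16 / (1 - k) := h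
      _ = φ a 0 / (16 * (1 - k)) := by rw [div_div]
  -- the cubic equation
  have heqD : ∀ a b : E, D ((2 : ℝ) • a + b) + D ((2 : ℝ) • a - b)
      = (2 : ℝ) • D (a + b) + (2 : ℝ) • D (a - b) + (12 : ℝ) • D a := by
    intro a b
    set L : ℕ → F := fun n =>
      g n ((2 : ℝ) • a + b) + g n ((2 : ℝ) • a - b) - (2 : ℝ) • g n (a + b)
        - (2 : ℝ) • g n (a - b) - (12 : ℝ) • g n a with hLdef
    have hLt : Tendsto L atTop (𝓝 (D ((2 : ℝ) • a + b) + D ((2 : ℝ) • a - b)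
        - (2 : ℝ) • D (a + b) - (2 : ℝ) • D (a - b) - (12 : ℝ) • D a)) := by
      exact ((((hD _).add (hD _)).sub ((hD _).const_smul _)).sub
        ((hD _).const_smul _)).sub ((hD _).const_smul _)
    have hLnorm : ∀ n, ‖L n‖ ≤ φ a b * k ^ n := by
      intro n
      have harg1 : (2 : ℝ) ^ n • ((2 : ℝ) • a + b)
          = (2 : ℝ) • ((2 : ℝ) ^ n • a) + (2 : ℝ) ^ n • b := by
        rw [smul_add, smul_smul, smul_smul, mul_comm]
      have harg2 : (2 : ℝ) ^ n • ((2 : ℝ) • a - b)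
          = (2 : ℝ) • ((2 : ℝ) ^ n • a) - (2 : ℝ) ^ n • b := by
        rw [smul_sub, smul_smul, smul_smul, mul_comm]
      have harg3 : (2 : ℝ) ^ n • (a + b) = (2 : ℝ) ^ n • a + (2 : ℝ) ^ n • b :=
        smul_add _ _ _
      have harg4 : (2 : ℝ) ^ n • (a - b) = (2 : ℝ) ^ n • a - (2 : ℝ) ^ n • b :=
        smul_sub _ _ _
      have hrw : L n = ((8 : ℝ)⁻¹) ^ n •
          (f ((2 : ℝ) • ((2 : ℝ) ^ n • a) + (2 : ℝ) ^ n • b)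
            + f ((2 : ℝ) • ((2 : ℝ) ^ n • a) - (2 : ℝ) ^ n • b)
            - (2 : ℝ) • f ((2 : ℝ) ^ n • a + (2 : ℝ) ^ n • b)
            - (2 : ℝ) • f ((2 : ℝ) ^ n • a - (2 : ℝ) ^ n • b)
            - (12 : ℝ) • f ((2 : ℝ) ^ n • a)) := by
        simp only [hLdef, hgdef, harg1, harg2, harg3, harg4]
        module
      rw [hrw, norm_smul]
      have h8 : ‖((8 : ℝ)⁻¹) ^ n‖ = ((8 : ℝ)⁻¹) ^ n := by
        rw [Real.norm_eq_abs, abs_of_pos]; positivity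
      rw [h8]
      calc ((8 : ℝ)⁻¹) ^ n * ‖_‖
          ≤ ((8 : ℝ)⁻¹) ^ n * φ ((2 : ℝ) ^ n • a) ((2 : ℝ) ^ n • b) := by
            apply mul_le_mul_of_nonneg_left (hf _ _); positivity
        _ ≤ ((8 : ℝ)⁻¹) ^ n * ((8 * k) ^ n * φ a b) := by
            apply mul_le_mul_of_nonneg_left (hφiter n a b); positivity
        _ = φ a b * k ^ n := by
            have hpow : ((8 : ℝ)⁻¹) ^ n * (8 * k) ^ n = k ^ n := by
              rw [← mul_pow]; congr 1; ring
            rw [← mul_assoc, hpow]; ring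
    have hL0 : Tendsto L atTop (𝓝 0) := by
      apply squeeze_zero_norm hLnorm
      have : Tendsto (fun n : ℕ => φ a b * k ^ n) atTop (𝓝 (φ a b * 0)) :=
        (tendsto_pow_atTop_nhds_zero_of_lt_one hk0.le hk1).const_mul _
      simpa using this
    have := tendsto_nhds_unique hLt hL0
    have h' : D ((2 : ℝ) • a + b) + D ((2 : ℝ) • a - b)
        - ((2 : ℝ) • D (a + b) + (2 : ℝ) • D (a - b) + (12 : ℝ) • D a) = 0 := by
      rw [← this]; abel
    exact sub_eq_zero.mp h'
  refine ⟨D, ⟨heqD, hbound⟩, ?_⟩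
  rintro D' ⟨heq', hbnd'⟩
  -- doubling for solutions of the cubic equation
  have hdouble : ∀ (G : E → F), (∀ a b : E, G ((2 : ℝ) • a + b) + G ((2 : ℝ) • a - b)
      = (2 : ℝ) • G (a + b) + (2 : ℝ) • G (a - b) + (12 : ℝ) • G a) →
      ∀ (n : ℕ) (a : E), G ((2 : ℝ) ^ n • a) = (8 : ℝ) ^ n • G a := by
    intro G hG n
    induction n with
    | zero => intro a; simp
    | succ n ih =>
      intro a
      have h := hG a 0
      simp only [add_zero, sub_zero] at h
      have h2 : (2 : ℝ) • G ((2 : ℝ) • a) = (16 : ℝ) • G a := by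
        rw [two_smul, h]; module
      have hG2 : G ((2 : ℝ) • a) = (8 : ℝ) • G a := by
        have := congrArg (fun x => (2 : ℝ)⁻¹ • x) h2
        simp only [smul_smul] at this
        norm_num at this
        exact this
      have harg : (2 : ℝ) ^ (n + 1) • a = (2 : ℝ) ^ n • ((2 : ℝ) • a) := by
        rw [smul_smul, pow_succ]
      rw [harg, ih, hG2, smul_smul, pow_succ]
  -- compare D' and D
  funext a
  have hcomp : ∀ n : ℕ, ‖D' a - D a‖ ≤ (2 * φ a 0 / (16 * (1 - k))) * k ^ n := by
    intro n
    have hD'n := hdouble D' heq' n a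
    have hDn := hdouble D heqD n a
    have h8pos : (0 : ℝ) < (8 : ℝ) ^ n := by positivity
    have hkey : ‖D' a - D a‖ = ((8 : ℝ)⁻¹) ^ n * ‖D' ((2 : ℝ) ^ n • a) - D ((2 : ℝ) ^ n • a)‖ := by
      rw [hD'n, hDn, ← smul_sub, norm_smul, Real.norm_eq_abs, abs_of_pos h8pos,
        ← mul_assoc, ← mul_pow]
      norm_num
    rw [hkey]
    have htri : ‖D' ((2 : ℝ) ^ n • a) - D ((2 : ℝ) ^ n • a)‖
        ≤ 2 * (φ ((2 : ℝ) ^ n • a) 0 / (16 * (1 - k))) := by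
      calc ‖D' ((2 : ℝ) ^ n • a) - D ((2 : ℝ) ^ n • a)‖
          ≤ ‖f ((2 : ℝ) ^ n • a) - D' ((2 : ℝ) ^ n • a)‖
            + ‖f ((2 : ℝ) ^ n • a) - D ((2 : ℝ) ^ n • a)‖ := by
            rw [← norm_neg (f _ - D' _)]
            have : D' ((2 : ℝ) ^ n • a) - D ((2 : ℝ) ^ n • a)
                = -(f ((2 : ℝ) ^ n • a) - D' ((2 : ℝ) ^ n • a))
                  + (f ((2 : ℝ) ^ n • a) - D ((2 : ℝ) ^ n • a)) := by abel
            rw [this]; exact norm_add_le _ _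
        _ ≤ 2 * (φ ((2 : ℝ) ^ n • a) 0 / (16 * (1 - k))) := by
            have h1 := hbnd' ((2 : ℝ) ^ n • a)
            have h2 := hbound ((2 : ℝ) ^ n • a)
            linarith
    have hφn : φ ((2 : ℝ) ^ n • a) 0 ≤ (8 * k) ^ n * φ a 0 := by
      have := hφiter n a 0; simpa using this
    have hden : (0 : ℝ) < 16 * (1 - k) := by nlinarith
    calc ((8 : ℝ)⁻¹) ^ n * ‖D' ((2 : ℝ) ^ n • a) - D ((2 : ℝ) ^ n • a)‖
        ≤ ((8 : ℝ)⁻¹) ^ n * (2 * (φ ((2 : ℝ) ^ n • a) 0 / (16 * (1 - k)))) := by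
          apply mul_le_mul_of_nonneg_left htri; positivity
      _ ≤ ((8 : ℝ)⁻¹) ^ n * (2 * ((8 * k) ^ n * φ a 0 / (16 * (1 - k)))) := by
          apply mul_le_mul_of_nonneg_left _ (by positivity)
          exact mul_le_mul_of_nonneg_left
            (div_le_div_of_nonneg_right hφn hden.le) (by norm_num)
      _ = (2 * φ a 0 / (16 * (1 - k))) * k ^ n := by
          have hpow : ((8 : ℝ)⁻¹) ^ n * (8 * k) ^ n = k ^ n := by
            rw [← mul_pow]; congr 1; ring
          calc ((8 : ℝ)⁻¹) ^ n * (2 * ((8 * k) ^ n * φ a 0 / (16 * (1 - k))))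
              = (((8 : ℝ)⁻¹) ^ n * (8 * k) ^ n) * (2 * φ a 0 / (16 * (1 - k))) := by
                ring
            _ = (2 * φ a 0 / (16 * (1 - k))) * k ^ n := by rw [hpow]; ring
  have hzero : Tendsto (fun n : ℕ => (2 * φ a 0 / (16 * (1 - k))) * k ^ n)
      atTop (𝓝 0) := by
    have : Tendsto (fun n : ℕ => (2 * φ a 0 / (16 * (1 - k))) * k ^ n)
        atTop (𝓝 ((2 * φ a 0 / (16 * (1 - k))) * 0)) :=
      (tendsto_pow_atTop_nhds_zero_of_lt_one hk0.le hk1).const_mul _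
    simpa using this
  have hle : ‖D' a - D a‖ ≤ 0 := ge_of_tendsto' hzero hcomp
  have : D' a - D a = 0 := by
    rw [← norm_le_zero_iff]; exact hle
  exact sub_eq_zero.mp this
end

section
/- Let Δ be the set of maps g : E → F with g(0) = 0 where E is a normed space and F a Banach space, and fix a function φ : E → [0,∞). Define d(g,h) = inf { c ∈ (0,∞) : ‖g(a) − h(a)‖ ≤ c·φ(a) for all a ∈ E } (with d(g,h) = ∞ if no such c exists). Then d is a generalized (extended-valued) metric on Δ and (Δ, d) is complete. -/
open Filter Topology ENNReal

/-!
A bound `d g h < c` forces `‖g a - h a‖ ≤ c φ a` at every point, so a `d`-Cauchy sequence is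
pointwise Cauchy in the Banach space `F` and has a pointwise limit. The weighted bounds
`‖u n a - u m a‖ ≤ c φ a`, uniform in `m ≥ N`, pass to the limit `m → ∞`, which gives
`d (u n) g ≤ c` for `n ≥ N`; the limit vanishes at `0` because every `u n` does.
-/

namespace WeightedDist

variable {α F : Type*} [NormedAddCommGroup F]

noncomputable def weightedDist (φ : α → ℝ) (f g : α → F) : ℝ≥0∞ :=
  sInf {c : ℝ≥0∞ | 0 < c ∧ c ≠ ⊤ ∧ ∀ a, ‖f a - g a‖ ≤ c.toReal * φ a}

variable {φ : α → ℝ} {f g h : α → F} {c : ℝ≥0∞}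

theorem weightedDist_le (hc0 : 0 < c) (hc : c ≠ ⊤)
    (hbound : ∀ a, ‖f a - g a‖ ≤ c.toReal * φ a) : weightedDist φ f g ≤ c :=
  sInf_le ⟨hc0, hc, hbound⟩

theorem norm_sub_le_of_weightedDist_lt (hφ : ∀ a, 0 ≤ φ a) (hc : c ≠ ⊤)
    (hlt : weightedDist φ f g < c) (a : α) : ‖f a - g a‖ ≤ c.toReal * φ a := by
  obtain ⟨c', ⟨-, hc't, hbound⟩, hc'c⟩ := sInf_lt_iff.mp hlt
  exact (hbound a).trans <|
    mul_le_mul_of_nonneg_right (ENNReal.toReal_mono hc hc'c.le) (hφ a)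

theorem weightedDist_self (hφ : ∀ a, 0 ≤ φ a) (f : α → F) : weightedDist φ f f = 0 :=
  nonpos_iff_eq_zero.mp <| le_of_forall_gt_imp_ge_of_dense fun c hc => by
    obtain rfl | hct := eq_or_ne c ⊤
    · exact le_top
    · exact weightedDist_le hc hct fun a => by
        simpa using mul_nonneg ENNReal.toReal_nonneg (hφ a)

theorem eq_of_weightedDist_eq_zero (hφ : ∀ a, 0 ≤ φ a) (h0 : weightedDist φ f g = 0) :
    f = g := by
  funext a
  have hsmall : ∀ δ : ℝ, 0 < δ → ‖f a - g a‖ ≤ δ * φ a := fun δ hδ => by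
    have hle := norm_sub_le_of_weightedDist_lt hφ ofReal_ne_top
      (h0 ▸ ENNReal.ofReal_pos.mpr hδ) a
    rwa [toReal_ofReal hδ.le] at hle
  have hlim : Tendsto (fun δ : ℝ => δ * φ a) (𝓝[>] 0) (𝓝 0) := by
    simpa using ((tendsto_id (x := 𝓝 (0 : ℝ))).mul_const (φ a)).mono_left nhdsWithin_le_nhds
  have hle : ‖f a - g a‖ ≤ 0 := ge_of_tendsto hlim (eventually_nhdsWithin_of_forall hsmall)
  exact sub_eq_zero.mp (norm_le_zero_iff.mp hle)

theorem weightedDist_comm (φ : α → ℝ) (f g : α → F) :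
    weightedDist φ f g = weightedDist φ g f := by
  simp only [weightedDist, norm_sub_rev (f _)]

theorem weightedDist_triangle (φ : α → ℝ) (f g h : α → F) :
    weightedDist φ f h ≤ weightedDist φ f g + weightedDist φ g h := by
  unfold weightedDist
  rw [sInf_add]
  refine le_iInf₂ fun c₁ ⟨hc₁0, hc₁t, hc₁⟩ => ?_
  rw [add_comm, sInf_add]
  refine le_iInf₂ fun c₂ ⟨_, hc₂t, hc₂⟩ => ?_
  refine weightedDist_le (hc₁0.trans_le le_add_self) (add_ne_top.mpr ⟨hc₂t, hc₁t⟩) fun a => ?_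
  calc ‖f a - h a‖ ≤ ‖f a - g a‖ + ‖g a - h a‖ := norm_sub_le_norm_sub_add_norm_sub _ _ _
    _ ≤ c₁.toReal * φ a + c₂.toReal * φ a := add_le_add (hc₁ a) (hc₂ a)
    _ = (c₂ + c₁).toReal * φ a := by rw [toReal_add hc₂t hc₁t]; ring

variable {u : ℕ → α → F}

theorem cauchySeq_apply (hφ : ∀ a, 0 ≤ φ a)
    (hu : ∀ ε : ℝ≥0∞, 0 < ε → ∃ N : ℕ, ∀ m n : ℕ, N ≤ m → N ≤ n →
      weightedDist φ (u m) (u n) < ε) (a : α) :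
    CauchySeq fun n => u n a := by
  refine Metric.cauchySeq_iff.mpr fun ε hε => ?_
  have hφ1 : 0 < φ a + 1 := by linarith [hφ a]
  set δ := ε / (φ a + 1)
  have hδ : 0 < δ := div_pos hε hφ1
  have hδε : δ * φ a < ε := by
    rw [div_mul_eq_mul_div, div_lt_iff₀ hφ1]
    nlinarith
  obtain ⟨N, hN⟩ := hu (ENNReal.ofReal δ) (ENNReal.ofReal_pos.mpr hδ)
  refine ⟨N, fun m hm n hn => ?_⟩
  have hle := norm_sub_le_of_weightedDist_lt hφ ofReal_ne_top (hN m n hm hn) a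
  rw [toReal_ofReal hδ.le] at hle
  exact (dist_eq_norm _ _).trans_lt (hle.trans_lt hδε)

theorem weightedDist_le_of_tendsto (hφ : ∀ a, 0 ≤ φ a) (hc0 : 0 < c) (hc : c ≠ ⊤)
    (hg : ∀ a, Tendsto (fun m => u m a) atTop (𝓝 (g a)))
    (hfu : ∀ᶠ m in atTop, weightedDist φ f (u m) < c) : weightedDist φ f g ≤ c :=
  weightedDist_le hc0 hc fun a =>
    le_of_tendsto ((tendsto_const_nhds.sub (hg a)).norm)
      (hfu.mono fun _ hm => norm_sub_le_of_weightedDist_lt hφ hc hm a)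

theorem exists_tendsto_of_cauchy [CompleteSpace F] (hφ : ∀ a, 0 ≤ φ a)
    (hu : ∀ ε : ℝ≥0∞, 0 < ε → ∃ N : ℕ, ∀ m n : ℕ, N ≤ m → N ≤ n →
      weightedDist φ (u m) (u n) < ε) :
    ∃ g : α → F, (∀ a, Tendsto (fun n => u n a) atTop (𝓝 (g a))) ∧
      ∀ ε : ℝ≥0∞, 0 < ε → ∃ N : ℕ, ∀ n : ℕ, N ≤ n → weightedDist φ (u n) g < ε := by
  choose g hg using fun a => cauchySeq_tendsto_of_complete (cauchySeq_apply hφ hu a)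
  refine ⟨g, hg, fun ε hε => ?_⟩
  obtain ⟨δ, hδ0, hδε⟩ := exists_between hε
  obtain ⟨N, hN⟩ := hu δ hδ0
  refine ⟨N, fun n hn => (weightedDist_le_of_tendsto hφ hδ0 hδε.ne_top hg ?_).trans_lt hδε⟩
  exact eventually_atTop.mpr ⟨N, fun m hm => hN n m hn hm⟩

end WeightedDist

open WeightedDist

theorem generalized_metric_complete_general {E F : Type*}
    [NormedAddCommGroup E]
    [NormedAddCommGroup F] [CompleteSpace F]
    (φ : E → ℝ) (hφ0 : ∀ a, 0 ≤ φ a)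
    (d : {g : E → F // g 0 = 0} → {g : E → F // g 0 = 0} → ℝ≥0∞)
    (hd : ∀ g h, d g h = sInf {c : ℝ≥0∞ | 0 < c ∧ c ≠ ⊤ ∧
      ∀ a : E, ‖g.1 a - h.1 a‖ ≤ c.toReal * φ a}) :
    (∀ g h, d g h = 0 ↔ g = h) ∧
    (∀ g h, d g h = d h g) ∧
    (∀ g h l, d g l ≤ d g h + d h l) ∧
    (∀ u : ℕ → {g : E → F // g 0 = 0},
      (∀ ε : ℝ≥0∞, 0 < ε → ∃ N : ℕ, ∀ m n : ℕ, N ≤ m → N ≤ n → d (u m) (u n) < ε) →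
      ∃ g, ∀ ε : ℝ≥0∞, 0 < ε → ∃ N : ℕ, ∀ n : ℕ, N ≤ n → d (u n) g < ε) := by
  obtain rfl : d = fun g h => weightedDist φ g.1 h.1 := funext₂ hd
  refine ⟨fun g h => ⟨fun h0 => Subtype.ext (eq_of_weightedDist_eq_zero hφ0 h0),
      fun hgh => hgh ▸ weightedDist_self hφ0 _⟩,
    fun g h => weightedDist_comm φ g.1 h.1,
    fun g h l => weightedDist_triangle φ g.1 h.1 l.1, fun u hu => ?_⟩
  obtain ⟨g, hg, hug⟩ := exists_tendsto_of_cauchy hφ0 hu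
  have hg0 : g 0 = 0 := tendsto_nhds_unique (hg 0) (by simp only [(u _).2, tendsto_const_nhds])
  exact ⟨⟨g, hg0⟩, hug⟩

theorem generalized_metric_complete {E F : Type*}
    [NormedAddCommGroup E] [NormedSpace ℝ E]
    [NormedAddCommGroup F] [NormedSpace ℝ F] [CompleteSpace F]
    (φ : E → ℝ) (hφ0 : ∀ a, 0 ≤ φ a)
    (d : {g : E → F // g 0 = 0} → {g : E → F // g 0 = 0} → ℝ≥0∞)
    (hd : ∀ g h, d g h = sInf {c : ℝ≥0∞ | 0 < c ∧ c ≠ ⊤ ∧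
      ∀ a : E, ‖g.1 a - h.1 a‖ ≤ c.toReal * φ a}) :
    (∀ g h, d g h = 0 ↔ g = h) ∧
    (∀ g h, d g h = d h g) ∧
    (∀ g h l, d g l ≤ d g h + d h l) ∧
    (∀ u : ℕ → {g : E → F // g 0 = 0},
      (∀ ε : ℝ≥0∞, 0 < ε → ∃ N : ℕ, ∀ m n : ℕ, N ≤ m → N ≤ n → d (u m) (u n) < ε) →
      ∃ g, ∀ ε : ℝ≥0∞, 0 < ε → ∃ N : ℕ, ∀ n : ℕ, N ≤ n → d (u n) g < ε) :=
  generalized_metric_complete_general φ hφ0 d hd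
end
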